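/- Let p be an odd prime, m ≥ 2, α a primitive element of GF(p^{2m}), e = (p^m−1)/(p−1), and ψ a nonprincipal additive character of GF(p^{2m}). If X = {x ∈ GF(p^{2m}) \ {0} : Tr_{m/1}(x^{p^m+1}) = 0}, then ψ(X) := Σ_{x∈X} ψ(x) equals either p^{m-1} − 1 or −((p−1)p^{m-1} + 1). -/
import Mathlib

/-- The trace-like map x ↦ x + x^p + ... + x^(p^(m-1)), computed inside the big field. -/
def fieldTr (p m : ℕ) {F : Type} [Field F] (x : F) : F :=
  ∑ i ∈ Finset.range m, x ^ p ^ i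

open Finset

section Aux
set_option linter.unusedSectionVars false
set_option linter.unusedVariables false

variable {p m : ℕ} {K : Type} [Field K] [Fintype K] [DecidableEq K]

lemma aux_charP (hp : p.Prime) (hm : 1 ≤ m) (hK : Fintype.card K = p ^ (2 * m)) :
    CharP K p := by
  obtain ⟨n, hn, hcard⟩ := FiniteField.card K (ringChar K)
  have h : ringChar K = p := by
    have hdvd : ringChar K ∣ p ^ (2 * m) := by
      rw [← hK, hcard]; exact dvd_pow_self _ n.pos.ne'
    have := hn.dvd_of_dvd_pow hdvd
    exact (Nat.prime_dvd_prime_iff_eq hn hp).mp this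
  rw [← h]; exact ringChar.charP K

/-- fixed points of Frobenius stay fixed under iterates -/
lemma frob_fix_pow {x : K} (hx : x ^ p = x) (k : ℕ) : x ^ p ^ k = x := by
  induction k with
  | zero => simp
  | succ k ih => rw [pow_succ, pow_mul, ih, hx]

lemma cast_pow_p (hp : p.Prime) [CharP K p] (c : ZMod p) :
    (ZMod.castHom (dvd_refl p) K c) ^ p = ZMod.castHom (dvd_refl p) K c := by
  haveI := Fact.mk hp
  rw [← map_pow, ZMod.pow_card]

lemma cast_injective (hp : p.Prime) [CharP K p] :
    Function.Injective (ZMod.castHom (dvd_refl p) K) := by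
  haveI := Fact.mk hp
  exact (ZMod.castHom (dvd_refl p) K).injective

/-- card of solution set of x^n = z is at most n -/
lemma card_pow_eq_const_le (n : ℕ) (hn : 1 ≤ n) (z : K) :
    (univ.filter fun x : K => x ^ n = z).card ≤ n := by
  classical
  set f : Polynomial K := Polynomial.X ^ n - Polynomial.C z with hf
  have hfne : f ≠ 0 := Polynomial.X_pow_sub_C_ne_zero (by omega) z
  have hdeg : f.natDegree ≤ n := by
    apply Polynomial.natDegree_sub_le_iff_left ?_ |>.mpr
    · simp [Polynomial.natDegree_X_pow]
    · exact le_trans (Polynomial.natDegree_C z).le (by omega)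
  have hsub : (univ.filter fun x : K => x ^ n = z) ⊆ f.roots.toFinset := by
    intro x hx
    simp only [mem_filter] at hx
    rw [Multiset.mem_toFinset, Polynomial.mem_roots hfne]
    simp [hf, Polynomial.IsRoot, hx.2]
  calc (univ.filter fun x : K => x ^ n = z).card ≤ f.roots.toFinset.card :=
        card_le_card hsub
    _ ≤ Multiset.card f.roots := Multiset.toFinset_card_le _
    _ ≤ f.natDegree := f.card_roots' 
    _ ≤ n := hdeg

lemma card_pow_eq_self_le (n : ℕ) (hn : 2 ≤ n) :
    (univ.filter fun x : K => x ^ n = x).card ≤ n := by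
  classical
  set f : Polynomial K := Polynomial.X ^ n - Polynomial.X with hf
  have h1n : ¬ (1 = n) := by omega
  have hcoeff : f.coeff n = 1 := by
    simp [hf, Polynomial.coeff_X_pow, Polynomial.coeff_X, h1n]
  have hfne : f ≠ 0 := fun h => by simp [h] at hcoeff
  have hdeg : f.natDegree ≤ n := by
    apply Polynomial.natDegree_sub_le_iff_left ?_ |>.mpr
    · simp [Polynomial.natDegree_X_pow]
    · simp [Polynomial.natDegree_X]; omega
  have hsub : (univ.filter fun x : K => x ^ n = x) ⊆ f.roots.toFinset := by
    intro x hx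
    simp only [mem_filter] at hx
    rw [Multiset.mem_toFinset, Polynomial.mem_roots hfne]
    simp [hf, Polynomial.IsRoot, hx.2]
  calc (univ.filter fun x : K => x ^ n = x).card ≤ f.roots.toFinset.card :=
        card_le_card hsub
    _ ≤ Multiset.card f.roots := Multiset.toFinset_card_le _
    _ ≤ f.natDegree := f.card_roots'
    _ ≤ n := hdeg

/-- every Frobenius-fixed point is in the prime field -/
lemma mem_prime_field (hp : p.Prime) [CharP K p] {x : K} (hx : x ^ p = x) :
    ∃ c : ZMod p, ZMod.castHom (dvd_refl p) K c = x := by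
  classical
  haveI := Fact.mk hp
  set S := (univ.filter fun y : K => y ^ p = y) with hS
  set T := (univ : Finset (ZMod p)).image (ZMod.castHom (dvd_refl p) K) with hT
  have hTS : T ⊆ S := by
    intro y hy
    rw [hT, mem_image] at hy
    obtain ⟨c, _, rfl⟩ := hy
    rw [hS, mem_filter]
    exact ⟨mem_univ _, cast_pow_p hp c⟩
  have hcardT : T.card = p := by
    rw [hT, card_image_of_injective _ (cast_injective hp), card_univ, ZMod.card]
  have hST : S = T := by
    apply (eq_of_subset_of_card_le hTS ?_).symm
    rw [hcardT]
    exact card_pow_eq_self_le p hp.two_le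
  have hxS : x ∈ S := by simp [hS, hx]
  rw [hST, hT, mem_image] at hxS
  obtain ⟨c, _, hc⟩ := hxS
  exact ⟨c, hc⟩

noncomputable def trZ (p m : ℕ) (K : Type) [Field K] [CharP K p] (y : K) : ZMod p := by
  classical
  exact if h : ∃ c : ZMod p, ZMod.castHom (dvd_refl p) K c = fieldTr p m y
    then h.choose else 0

lemma trZ_spec_of_ex (hp : p.Prime) [CharP K p] {y : K}
    (h : ∃ c : ZMod p, ZMod.castHom (dvd_refl p) K c = fieldTr p m y) :
    ZMod.castHom (dvd_refl p) K (trZ p m K y) = fieldTr p m y := by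
  classical
  rw [trZ, dif_pos h]
  exact h.choose_spec

lemma trZ_unique (hp : p.Prime) [CharP K p] {y : K} (c : ZMod p)
    (hc : ZMod.castHom (dvd_refl p) K c = fieldTr p m y) : trZ p m K y = c := by
  exact cast_injective hp (by rw [trZ_spec_of_ex hp ⟨c, hc⟩, hc])

lemma fieldTr_add [CharP K p] (hp : p.Prime) (x y : K) :
    fieldTr p m (x + y) = fieldTr p m x + fieldTr p m y := by
  haveI := Fact.mk hp
  simp only [fieldTr, ← sum_add_distrib]
  exact Finset.sum_congr rfl fun i _ => add_pow_char_pow x y p i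

lemma fieldTr_smul [CharP K p] (hp : p.Prime) {c : K} (hc : c ^ p = c) (y : K) :
    fieldTr p m (c * y) = c * fieldTr p m y := by
  simp only [fieldTr, mul_sum]
  exact Finset.sum_congr rfl fun i _ => by rw [mul_pow, frob_fix_pow hc]

lemma fieldTr_pow_p [CharP K p] (hp : p.Prime) {y : K} (hy : y ^ p ^ m = y) :
    (fieldTr p m y) ^ p = fieldTr p m y := by
  haveI := Fact.mk hp
  rw [fieldTr, sum_pow_char]
  have h1 : ∀ i, (y ^ p ^ i) ^ p = y ^ p ^ (i + 1) := by
    intro i; rw [← pow_mul, ← pow_succ]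
  simp only [h1]
  have e1 := Finset.sum_range_succ' (fun i => y ^ p ^ i) m
  have e2 := Finset.sum_range_succ (fun i => y ^ p ^ i) m
  simp only [pow_zero, pow_one, hy] at e1 e2
  have := e1.symm.trans e2
  exact add_right_cancel this

/-- trZ exists for elements of the subfield F_q -/
lemma trZ_spec (hp : p.Prime) [CharP K p] {y : K} (hy : y ^ p ^ m = y) :
    ZMod.castHom (dvd_refl p) K (trZ p m K y) = fieldTr p m y :=
  trZ_spec_of_ex hp (mem_prime_field hp (fieldTr_pow_p hp hy))

lemma trZ_zero [CharP K p] (hp : p.Prime) : trZ p m K 0 = 0 := by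
  apply trZ_unique hp
  rw [map_zero, fieldTr]
  symm
  apply Finset.sum_eq_zero
  intro i _
  exact zero_pow (pow_ne_zero i hp.ne_zero)

lemma trZ_add [CharP K p] (hp : p.Prime) {y z : K} (hy : y ^ p ^ m = y)
    (hz : z ^ p ^ m = z) : trZ p m K (y + z) = trZ p m K y + trZ p m K z := by
  apply trZ_unique hp
  rw [map_add, trZ_spec hp hy, trZ_spec hp hz, fieldTr_add hp]

lemma trZ_smul [CharP K p] (hp : p.Prime) (u : ZMod p) {y : K} (hy : y ^ p ^ m = y) :
    trZ p m K (ZMod.castHom (dvd_refl p) K u * y) = u * trZ p m K y := by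
  apply trZ_unique hp
  rw [map_mul, trZ_spec hp hy, fieldTr_smul hp (cast_pow_p hp u)]


lemma aux_alpha (hp : p.Prime) (hm : 1 ≤ m) (hK : Fintype.card K = p ^ (2 * m)) (α : K)
    (hα : ∀ x : K, x ≠ 0 → ∃ n : ℕ, x = α ^ n) :
    α ≠ 0 ∧ α ^ (p ^ (2 * m) - 1) = 1 ∧
      ∀ d : ℕ, 0 < d → α ^ d = 1 → p ^ (2 * m) - 1 ≤ d := by
  have hcard3 : 3 ≤ Fintype.card K := by
    rw [hK]
    calc 3 ≤ 2 ^ 2 := by norm_num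
      _ ≤ p ^ 2 := Nat.pow_le_pow_left hp.two_le 2
      _ ≤ p ^ (2 * m) := Nat.pow_le_pow_right hp.pos (by omega)
  have hα0 : α ≠ 0 := by
    have hns : ¬ (univ : Finset K) ⊆ {0, 1} := by
      intro h
      have h1 := Finset.card_le_card h
      have hle : ({0, 1} : Finset K).card ≤ 2 :=
        (Finset.card_insert_le _ _).trans (by simp)
      rw [card_univ] at h1
      omega
    obtain ⟨x, -, hx⟩ := Finset.not_subset.mp hns
    simp only [Finset.mem_insert, Finset.mem_singleton, not_or] at hx
    obtain ⟨hx0, hx1⟩ := hx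
    obtain ⟨n, rfl⟩ := hα x hx0
    intro h
    rcases Nat.eq_zero_or_pos n with hn | hn
    · rw [hn, pow_zero] at hx1; exact hx1 rfl
    · rw [h, zero_pow hn.ne'] at hx0; exact hx0 rfl
  have h1 : α ^ (p ^ (2 * m) - 1) = 1 := by
    rw [← hK]; exact FiniteField.pow_card_sub_one_eq_one α hα0
  refine ⟨hα0, h1, fun d hd hαd => ?_⟩
  have hsub : (univ.filter fun x : K => x ≠ 0) ⊆ (range d).image (α ^ ·) := by
    intro x hx
    rw [mem_filter] at hx
    obtain ⟨n, rfl⟩ := hα x hx.2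
    rw [mem_image]
    refine ⟨n % d, mem_range.mpr (Nat.mod_lt _ hd), ?_⟩
    conv_rhs => rw [← Nat.mod_add_div n d]
    rw [pow_add, pow_mul, hαd, one_pow, mul_one]
  have hcardfil : (univ.filter fun x : K => x ≠ 0).card = p ^ (2 * m) - 1 := by
    have : (univ.filter fun x : K => x ≠ 0) = univ.erase 0 := by
      ext x; simp [Finset.mem_erase]
    rw [this, Finset.card_erase_of_mem (mem_univ _), card_univ, hK]
  calc p ^ (2 * m) - 1 = (univ.filter fun x : K => x ≠ 0).card := hcardfil.symm
    _ ≤ ((range d).image (α ^ ·)).card := card_le_card hsub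
    _ ≤ (range d).card := card_image_le
    _ = d := card_range d

lemma aux_Fq_card (hp : p.Prime) (hm : 1 ≤ m) (hK : Fintype.card K = p ^ (2 * m)) (α : K)
    (hα : ∀ x : K, x ≠ 0 → ∃ n : ℕ, x = α ^ n) :
    (univ.filter fun y : K => y ^ p ^ m = y).card = p ^ m := by
  obtain ⟨hα0, h1, hmin⟩ := aux_alpha hp hm hK α hα
  set q := p ^ m with hq
  have hq2 : 2 ≤ q := by
    calc 2 ≤ p := hp.two_le
      _ = p ^ 1 := (pow_one p).symm
      _ ≤ q := Nat.pow_le_pow_right hp.pos hm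
  have hqq : p ^ (2 * m) = q * q := by rw [hq, ← pow_add]; ring_nf
  have hcard : Fintype.card K = q * q := by rw [hK, hqq]
  have hαq2 : α ^ (q * q) = α := by rw [← hcard]; exact FiniteField.pow_card α
  set A : Finset K := insert 0 ((range (q - 1)).image fun k => α ^ ((q + 1) * k)) with hA
  have hsubA : A ⊆ univ.filter fun y : K => y ^ q = y := by
    intro y hy
    rw [hA, Finset.mem_insert] at hy
    rw [mem_filter]
    refine ⟨mem_univ _, ?_⟩
    rcases hy with rfl | hy
    · exact zero_pow (by omega)
    · rw [mem_image] at hy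
      obtain ⟨k, -, rfl⟩ := hy
      rw [← pow_mul]
      have harith : (q + 1) * k * q = (q * q) * k + q * k := by ring
      have harith2 : k + q * k = (q + 1) * k := by ring
      rw [harith, pow_add, pow_mul, hαq2, ← pow_add, harith2]
  have key : ∀ k k' : ℕ, k < k' → k' < q - 1 →
      α ^ ((q + 1) * k) = α ^ ((q + 1) * k') → False := by
    intro k k' hlt hk' hkk
    obtain ⟨c, rfl⟩ := Nat.exists_eq_add_of_lt hlt
    have hpow : α ^ ((q + 1) * (c + 1)) = 1 := by
      have h2 : α ^ ((q+1) * k) * α ^ ((q+1) * (c+1)) = α ^ ((q+1) * k) * 1 := by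
        have hexp : (q+1)*k + (q+1)*(c+1) = (q+1)*(k+c+1) := by ring
        rw [mul_one, ← pow_add, hexp, ← hkk]
      exact mul_left_cancel₀ (pow_ne_zero _ hα0) h2
    have hlow := hmin _ (Nat.mul_pos (by omega) (by omega)) hpow
    rw [hqq] at hlow
    obtain ⟨s, hqs⟩ := Nat.exists_eq_add_of_le hq2
    have e1 : q * q = s * s + 4 * s + 4 := by rw [hqs]; ring
    have hcle : c + 1 ≤ s := by omega
    have h5 : (q + 1) * (c + 1) ≤ (q + 1) * s := Nat.mul_le_mul_left _ hcle
    have e2 : (q + 1) * s = s * s + 3 * s := by rw [hqs]; ring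
    omega
  have hinj : Set.InjOn (fun k => α ^ ((q + 1) * k)) (range (q - 1)) := by
    intro k hk k' hk' hkk
    simp only [mem_coe, mem_range] at hk hk'
    simp only at hkk
    rcases lt_trichotomy k k' with h | h | h
    · exact absurd (key k k' h hk' hkk) not_false
    · exact h
    · exact absurd (key k' k h hk hkk.symm) not_false
  have hcardA : A.card = q := by
    rw [hA, Finset.card_insert_of_notMem, Finset.card_image_of_injOn hinj, card_range]
    · omega
    · rw [mem_image]
      rintro ⟨k, -, hk⟩
      exact pow_ne_zero _ hα0 hk
  have hub := card_pow_eq_self_le (K := K) q hq2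
  have hlb := card_le_card hsubA
  omega

lemma aux_fiber (hp : p.Prime) (hm : 1 ≤ m) (hK : Fintype.card K = p ^ (2 * m)) (α : K)
    (hα : ∀ x : K, x ≠ 0 → ∃ n : ℕ, x = α ^ n) :
    ∀ z : K, z ^ p ^ m = z → z ≠ 0 →
      (univ.filter fun x : K => x ^ (p ^ m + 1) = z).card = p ^ m + 1 := by
  classical
  set q := p ^ m with hq
  have hq2 : 2 ≤ q := by
    calc 2 ≤ p := hp.two_le
      _ = p ^ 1 := (pow_one p).symm
      _ ≤ q := Nat.pow_le_pow_right hp.pos hm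
  have hqq : Fintype.card K = q * q := by rw [hK, hq, ← pow_add]; ring_nf
  set T := (univ.filter fun y : K => y ^ q = y).erase 0 with hT
  have hcardT : T.card = q - 1 := by
    rw [hT, Finset.card_erase_of_mem, aux_Fq_card hp hm hK α hα]
    rw [mem_filter]
    exact ⟨mem_univ _, zero_pow (by omega)⟩
  have hmaps : ∀ x ∈ univ.filter fun x : K => x ≠ 0, x ^ (q + 1) ∈ T := by
    intro x hx
    rw [mem_filter] at hx
    rw [hT, Finset.mem_erase, mem_filter]
    refine ⟨pow_ne_zero _ hx.2, mem_univ _, ?_⟩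
    rw [← pow_mul]
    have : (q + 1) * q = q * q + q := by ring
    rw [this, pow_add, ← hqq, FiniteField.pow_card, pow_succ]
    ring
  have hpart := Finset.card_eq_sum_card_fiberwise hmaps
  have hfib_eq : ∀ z ∈ T, ((univ.filter fun x : K => x ≠ 0).filter
      fun x => x ^ (q + 1) = z) = univ.filter fun x : K => x ^ (q + 1) = z := by
    intro z hz
    rw [hT, Finset.mem_erase] at hz
    ext x
    simp only [Finset.mem_filter, mem_univ, true_and, and_iff_right_iff_imp]
    intro hxz
    intro h0
    rw [h0] at hxz
    rw [zero_pow (by omega)] at hxz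
    exact hz.1 hxz.symm
  rw [Finset.sum_congr rfl fun z hz => by rw [hfib_eq z hz]] at hpart
  have hcardne : (univ.filter fun x : K => x ≠ 0).card = q * q - 1 := by
    have : (univ.filter fun x : K => x ≠ 0) = univ.erase 0 := by
      ext x; simp [Finset.mem_erase]
    rw [this, Finset.card_erase_of_mem (mem_univ _), card_univ, hqq]
  intro z hzq hz0
  by_contra hne
  have hzT : z ∈ T := by
    rw [hT, Finset.mem_erase, mem_filter]
    exact ⟨hz0, mem_univ _, hzq⟩
  have hub : ∀ w ∈ T, (univ.filter fun x : K => x ^ (q + 1) = w).card ≤ q + 1 :=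
    fun w _ => card_pow_eq_const_le (q + 1) (by omega) w
  have hlt : ∑ w ∈ T, (univ.filter fun x : K => x ^ (q + 1) = w).card
      < ∑ w ∈ T, (q + 1) := by
    apply Finset.sum_lt_sum hub
    have hz := hub z hzT
    exact ⟨z, hzT, by omega⟩
  rw [← hpart, hcardne, Finset.sum_const, hcardT, smul_eq_mul] at hlt
  obtain ⟨s, hqs⟩ := Nat.exists_eq_add_of_le hq2
  have e1 : q * q = s * s + 4 * s + 4 := by rw [hqs]; ring
  have e2 : (q - 1) * (q + 1) = s * s + 4 * s + 3 := by
    rw [hqs]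
    have : 2 + s - 1 = 1 + s := by omega
    rw [this]; ring
  omega

lemma aux_trZ_ne [CharP K p] (hp : p.Prime) (hm : 1 ≤ m)
    (hK : Fintype.card K = p ^ (2 * m)) (α : K)
    (hα : ∀ x : K, x ≠ 0 → ∃ n : ℕ, x = α ^ n) :
    ∃ y : K, y ^ p ^ m = y ∧ trZ p m K y ≠ 0 := by
  classical
  by_contra hcon
  push_neg at hcon
  have hall : ∀ y : K, y ^ p ^ m = y → fieldTr p m y = 0 := by
    intro y hy
    have := trZ_spec hp hy
    rw [hcon y hy, map_zero] at this
    exact this.symm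
  set g : Polynomial K := ∑ i ∈ range m, Polynomial.X ^ p ^ i with hg
  have hcoeff : g.coeff (p ^ (m - 1)) = 1 := by
    rw [hg, Polynomial.finset_sum_coeff]
    rw [Finset.sum_eq_single (m - 1)]
    · simp [Polynomial.coeff_X_pow]
    · intro i hi hne
      rw [Polynomial.coeff_X_pow, if_neg]
      intro h
      exact hne (Nat.pow_right_injective hp.two_le h.symm)
    · intro h
      exact absurd (mem_range.mpr (by omega)) h
  have hgne : g ≠ 0 := fun h => by simp [h] at hcoeff
  have hdeg : g.natDegree ≤ p ^ (m - 1) := by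
    apply Polynomial.natDegree_sum_le_of_forall_le
    intro i hi
    rw [Polynomial.natDegree_X_pow]
    exact Nat.pow_le_pow_right hp.pos (by rw [mem_range] at hi; omega)
  have heval : ∀ y : K, g.eval y = fieldTr p m y := by
    intro y
    rw [hg, Polynomial.eval_finset_sum, fieldTr]
    exact Finset.sum_congr rfl fun i _ => by rw [Polynomial.eval_pow, Polynomial.eval_X]
  have hsub : (univ.filter fun y : K => y ^ p ^ m = y) ⊆ g.roots.toFinset := by
    intro y hy
    rw [mem_filter] at hy
    rw [Multiset.mem_toFinset, Polynomial.mem_roots hgne]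
    rw [Polynomial.IsRoot, heval]
    exact hall y hy.2
  have hcard := card_le_card hsub
  rw [aux_Fq_card hp hm hK α hα] at hcard
  have : g.roots.toFinset.card ≤ p ^ (m - 1) :=
    le_trans (Multiset.toFinset_card_le _) (le_trans (g.card_roots') hdeg)
  have hlt : p ^ (m - 1) < p ^ m := Nat.pow_lt_pow_right hp.one_lt (by omega)
  omega


lemma fieldTr_neg [CharP K p] (hp : p.Prime) (hodd : Odd p) (y : K) :
    fieldTr p m (-y) = -fieldTr p m y := by
  simp only [fieldTr, ← Finset.sum_neg_distrib]
  exact Finset.sum_congr rfl fun i _ => Odd.neg_pow (hodd.pow) y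

lemma trZ_neg [CharP K p] (hp : p.Prime) (hodd : Odd p) {y : K} :
    trZ p m K (-y) = -trZ p m K y := by
  rcases em (∃ c : ZMod p, ZMod.castHom (dvd_refl p) K c = fieldTr p m y) with h | h
  · apply trZ_unique hp
    rw [map_neg, trZ_spec_of_ex hp h, fieldTr_neg hp hodd]
  · have h2 : ¬ ∃ c : ZMod p, ZMod.castHom (dvd_refl p) K c = fieldTr p m (-y) := by
      rintro ⟨c, hc⟩
      exact h ⟨-c, by rw [map_neg, hc, fieldTr_neg hp hodd, neg_neg]⟩
    have e1 : trZ p m K (-y) = 0 := by rw [trZ, dif_neg h2]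
    have e2 : trZ p m K y = 0 := by rw [trZ, dif_neg h]
    rw [e1, e2, neg_zero]


end Aux

section Omega

variable {p : ℕ} {ω : ℂ}

lemma omega_pow_mod (hωp : ω ^ p = 1) (n : ℕ) : ω ^ n = ω ^ (n % p) := by
  conv_lhs => rw [← Nat.mod_add_div n p]
  rw [pow_add, pow_mul, hωp, one_pow, mul_one]

lemma omega_pow_val_add [NeZero p] (hωp : ω ^ p = 1) (a b : ZMod p) :
    ω ^ (a + b).val = ω ^ a.val * ω ^ b.val := by
  rw [← pow_add, ZMod.val_add, ← omega_pow_mod hωp]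

lemma omega_val_eq_one_iff (hp : p.Prime) (hωp : ω ^ p = 1) (hω1 : ω ≠ 1) (c : ZMod p) :
    ω ^ c.val = 1 ↔ c = 0 := by
  haveI : NeZero p := ⟨hp.ne_zero⟩
  constructor
  · intro h
    have hord : orderOf ω ∣ p := orderOf_dvd_of_pow_eq_one hωp
    rcases (Nat.Prime.eq_one_or_self_of_dvd hp _ hord) with h1 | h1
    · exact absurd (orderOf_eq_one_iff.mp h1) hω1
    · have hdvd : orderOf ω ∣ c.val := orderOf_dvd_of_pow_eq_one h
      rw [h1] at hdvd
      have hv0 : c.val = 0 := Nat.eq_zero_of_dvd_of_lt hdvd (ZMod.val_lt c)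
      exact (ZMod.val_eq_zero c).mp hv0
  · rintro rfl
    rw [ZMod.val_zero, pow_zero]

lemma omega_sum_zmod [NeZero p] (hp : p.Prime) (hωp : ω ^ p = 1) (hω1 : ω ≠ 1) :
    ∑ c : ZMod p, ω ^ c.val = 0 := by
  have h1 : ∑ c : ZMod p, ω ^ c.val = ∑ k ∈ range p, ω ^ k := by
    apply Finset.sum_nbij' (fun c : ZMod p => c.val) (fun k : ℕ => (k : ZMod p))
    · intro c _; exact mem_range.mpr (ZMod.val_lt c)
    · intro k _; exact mem_univ _
    · intro c _; exact ZMod.natCast_rightInverse c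
    · intro k hk; exact ZMod.val_cast_of_lt (mem_range.mp hk)
    · intro c _; rfl
  rw [h1, geom_sum_eq hω1, hωp, sub_self, zero_div]

lemma omega_sum_mul [NeZero p] (hp : p.Prime) (hωp : ω ^ p = 1) (hω1 : ω ≠ 1) (c : ZMod p)
    (hc : c ≠ 0) : ∑ t : ZMod p, ω ^ (t * c).val = 0 := by
  haveI := Fact.mk hp
  rw [← omega_sum_zmod hp hωp hω1]
  exact Fintype.sum_equiv (Equiv.mulRight₀ c hc) _ _ fun t => rfl

end Omega

section Chi

variable {p m : ℕ} {K : Type} [Field K] [Fintype K] [DecidableEq K]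

lemma exists_chi_rep [CharP K p] (hp : p.Prime) (hodd : Odd p) (hm : 1 ≤ m)
    (hK : Fintype.card K = p ^ (2 * m)) (α : K)
    (hα : ∀ x : K, x ≠ 0 → ∃ n : ℕ, x = α ^ n)
    (ψ : AddChar K ℂ) (hψ : ∃ a : K, ψ a ≠ 1) :
    ∃ (b : K) (ω : ℂ), b ≠ 0 ∧ ω ^ p = 1 ∧ ω ≠ 1 ∧
      ∀ x : K, ψ x = ω ^ (trZ p m K (b * x ^ p ^ m + b ^ p ^ m * x)).val := by
  classical
  haveI := Fact.mk hp
  obtain ⟨a₀, ha₀⟩ := hψ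
  set ω : ℂ := ψ a₀ with hω
  have hωp : ω ^ p = 1 := by
    rw [hω, ← AddChar.map_nsmul_eq_pow, nsmul_eq_mul, CharP.cast_eq_zero K p,
      zero_mul, AddChar.map_zero_eq_one]
  have hω1 : ω ≠ 1 := ha₀
  set q := p ^ m with hq
  have hq0 : q ≠ 0 := pow_ne_zero m hp.ne_zero
  have hqq : Fintype.card K = q * q := by rw [hK, hq, ← pow_add]; ring_nf
  have hxqq : ∀ x : K, (x ^ q) ^ q = x := by
    intro x; rw [← pow_mul, ← hqq, FiniteField.pow_card]
  have hpowq : ∀ x y : K, (x + y) ^ q = x ^ q + y ^ q := fun x y => add_pow_char_pow x y p m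
  have hmem : ∀ b x : K, (b * x ^ q + b ^ q * x) ^ q = b * x ^ q + b ^ q * x := by
    intro b x
    rw [hpowq, mul_pow, mul_pow, hxqq x, hxqq b]
    ring
  set chi : K → K → ℂ := fun b x => ω ^ (trZ p m K (b * x ^ q + b ^ q * x)).val with hchi
  have chi_zero_right : ∀ b : K, chi b 0 = 1 := by
    intro b
    simp only [hchi]
    rw [zero_pow hq0, mul_zero, mul_zero, add_zero, trZ_zero hp, ZMod.val_zero, pow_zero]
  have chi_zero_left : ∀ x : K, chi 0 x = 1 := by
    intro x
    simp only [hchi]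
    rw [zero_mul, zero_pow hq0, zero_mul, add_zero, trZ_zero hp, ZMod.val_zero, pow_zero]
  have chi_add : ∀ b x y : K, chi b (x + y) = chi b x * chi b y := by
    intro b x y
    simp only [hchi]
    rw [← omega_pow_val_add hωp, ← trZ_add hp (hmem b x) (hmem b y)]
    congr 2
    rw [hpowq]
    ring
  have chi_addb : ∀ b b' x : K, chi (b + b') x = chi b x * chi b' x := by
    intro b b' x
    simp only [hchi]
    rw [← omega_pow_val_add hωp, ← trZ_add hp (hmem b x) (hmem b' x)]
    congr 2
    rw [hpowq]
    ring
  have h2K : (2 : K) ≠ 0 := by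
    have h2 : ((2 : ℕ) : K) ≠ 0 := by
      rw [Ne, CharP.cast_eq_zero_iff K p 2]
      intro h
      have := (Nat.prime_dvd_prime_iff_eq hp Nat.prime_two).mp h
      rcases hodd with ⟨k, hk⟩
      omega
    simpa using h2
  have h2q : (2 : K) ^ q = 2 := by
    apply frob_fix_pow
    have : (2 : K) = 1 + 1 := by norm_num
    rw [this, add_pow_char, one_pow]
  have nondeg : ∀ x : K, x ≠ 0 → ∃ b : K, chi b x ≠ 1 := by
    intro x hx
    obtain ⟨y₀, hy₀q, hy₀⟩ := aux_trZ_ne hp hm hK α hα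
    have hx1 : x ^ (q + 1) ≠ 0 := pow_ne_zero _ hx
    have hx1q : (x ^ (q + 1)) ^ q = x ^ (q + 1) := by
      rw [← pow_mul]
      have : (q + 1) * q = q * q + q := by ring
      rw [this, pow_add, ← hqq, FiniteField.pow_card, pow_succ]
      ring
    set w : K := y₀ / (2 * x ^ (q + 1)) with hw
    have hwq : w ^ q = w := by
      rw [hw, div_pow, mul_pow, h2q, hx1q, hy₀q]
    refine ⟨x * w, ?_⟩
    have hkey : (x * w) * x ^ q + (x * w) ^ q * x = y₀ := by
      rw [mul_pow, hwq, hw]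
      field_simp
      ring
    simp only [hchi]
    rw [hkey]
    intro h
    exact hy₀ ((omega_val_eq_one_iff hp hωp hω1 _).mp h)
  have sum_b : ∀ x : K, x ≠ 0 → ∑ b : K, chi b x = 0 := by
    intro x hx
    obtain ⟨b₀, hb₀⟩ := nondeg x hx
    have h1 : ∑ b : K, chi b x = ∑ b : K, chi (b + b₀) x :=
      (Fintype.sum_equiv (Equiv.addRight b₀) _ _ fun b => rfl).symm
    rw [Finset.sum_congr rfl (fun b _ => chi_addb b b₀ x), ← Finset.sum_mul] at h1
    have h2 : (∑ b : K, chi b x) * (1 - chi b₀ x) = 0 := by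
      rw [mul_sub, mul_one, ← h1, sub_self]
    rcases mul_eq_zero.mp h2 with h | h
    · exact h
    · exact absurd (by linear_combination -h : chi b₀ x = 1) hb₀
  -- the dual-sum argument
  set D : K → ℂ := fun b => ∑ x : K, chi b x * ψ (-x) with hD
  have hψinv : ∀ x : K, ψ x * ψ (-x) = 1 := by
    intro x
    rw [← AddChar.map_add_eq_mul, add_neg_cancel, AddChar.map_zero_eq_one]
  have hswap : ∑ b : K, D b = (Fintype.card K : ℂ) := by
    simp only [hD]
    rw [Finset.sum_comm]
    have h1 : ∀ x : K, ∑ b : K, chi b x * ψ (-x) = (∑ b : K, chi b x) * ψ (-x) := by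
      intro x; rw [Finset.sum_mul]
    rw [Finset.sum_congr rfl fun x _ => h1 x]
    rw [Finset.sum_eq_single 0]
    · rw [Finset.sum_congr rfl fun b _ => chi_zero_right b, Finset.sum_const,
        neg_zero, AddChar.map_zero_eq_one, mul_one, card_univ, nsmul_eq_mul, mul_one]
    · intro x _ hx
      rw [sum_b x hx, zero_mul]
    · intro h; exact absurd (mem_univ 0) h
  have hDval : ∀ b : K, (∀ x, chi b x = ψ x) ∨ D b = 0 := by
    intro b
    by_cases hall : ∀ x, chi b x = ψ x
    · exact Or.inl hall
    · right
      push_neg at hall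
      obtain ⟨x₀, hx₀⟩ := hall
      set η : K → ℂ := fun x => chi b x * ψ (-x) with hη
      have hηmul : ∀ x y : K, η (x + y) = η x * η y := by
        intro x y
        simp only [hη]
        rw [chi_add, neg_add, AddChar.map_add_eq_mul]
        ring
      have hηx₀ : η x₀ ≠ 1 := by
        intro h
        simp only [hη] at h
        have h2 := hψinv x₀
        have hψne : ψ (-x₀) ≠ 0 := by
          intro hz; rw [hz, mul_zero] at h2; exact one_ne_zero h2.symm
        exact hx₀ (mul_right_cancel₀ hψne (h.trans h2.symm))
      have h1 : ∑ x : K, η x = ∑ x : K, η (x + x₀) :=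
        (Fintype.sum_equiv (Equiv.addRight x₀) _ _ fun x => rfl).symm
      rw [Finset.sum_congr rfl (fun x _ => hηmul x x₀), ← Finset.sum_mul] at h1
      have h2 : (∑ x : K, η x) * (1 - η x₀) = 0 := by
        rw [mul_sub, mul_one, ← h1, sub_self]
      rcases mul_eq_zero.mp h2 with h | h
      · exact h
      · exact absurd (by linear_combination -h : η x₀ = 1) hηx₀
  have hex : ∃ b : K, ∀ x, chi b x = ψ x := by
    by_contra hcon
    push_neg at hcon
    have hall0 : ∀ b : K, D b = 0 := by
      intro b
      rcases hDval b with h | h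
      · obtain ⟨x, hx⟩ := hcon b; exact absurd (h x) hx
      · exact h
    rw [Finset.sum_congr rfl fun b _ => hall0 b, Finset.sum_const, smul_zero] at hswap
    have : (Fintype.card K : ℂ) ≠ 0 := Nat.cast_ne_zero.mpr Fintype.card_ne_zero
    exact this hswap.symm
  obtain ⟨b, hb⟩ := hex
  have hbne : b ≠ 0 := by
    rintro rfl
    exact ha₀ (by rw [hω, ← hb a₀, chi_zero_left])
  exact ⟨b, ω, hbne, hωp, hω1, fun x => (hb x).symm⟩

end Chi


/-- For every nonprincipal additive character ψ of GF(p^{2m}), the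
character sum of ψ over X = {x ≠ 0 : Tr(x^(p^m+1)) = 0} is either p^(m-1) − 1 or
−((p−1)p^(m-1) + 1). -/
theorem denniston_stmt15 (p m e : ℕ) (hp : p.Prime) (hodd : Odd p) (hm : 2 ≤ m)
    (he : e * (p - 1) = p ^ m - 1)
    (K : Type) [Field K] [Fintype K] [DecidableEq K]
    (hK : Fintype.card K = p ^ (2 * m))
    (α : K) (hα : ∀ x : K, x ≠ 0 → ∃ n : ℕ, x = α ^ n)
    (ψ : AddChar K ℂ) (hψ : ∃ a : K, ψ a ≠ 1) :
    (∑ x ∈ Finset.univ.filter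
        (fun x : K => x ≠ 0 ∧ fieldTr p m (x ^ (p ^ m + 1)) = 0), ψ x)
        = (p : ℂ) ^ (m - 1) - 1 ∨
    (∑ x ∈ Finset.univ.filter
        (fun x : K => x ≠ 0 ∧ fieldTr p m (x ^ (p ^ m + 1)) = 0), ψ x)
        = -(((p : ℂ) - 1) * (p : ℂ) ^ (m - 1) + 1) := by
  classical
  haveI hcharP : CharP K p := aux_charP hp (by omega) hK
  haveI := Fact.mk hp
  haveI : NeZero p := ⟨hp.ne_zero⟩
  obtain ⟨b, ω, hb0, hωp, hω1, hψeq⟩ := exists_chi_rep hp hodd (by omega) hK α hα ψ hψ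
  set q := p ^ m with hq
  have hq0 : q ≠ 0 := pow_ne_zero m hp.ne_zero
  have hqq : Fintype.card K = q * q := by rw [hK, hq, ← pow_add]; ring_nf
  have hxqq : ∀ x : K, (x ^ q) ^ q = x := fun x => by
    rw [← pow_mul, ← hqq, FiniteField.pow_card]
  have hpowq : ∀ x y : K, (x + y) ^ q = x ^ q + y ^ q := fun x y => add_pow_char_pow x y p m
  have hmem : ∀ u x : K, (u * x ^ q + u ^ q * x) ^ q = u * x ^ q + u ^ q * x := by
    intro u x; rw [hpowq, mul_pow, mul_pow, hxqq x, hxqq u]; ring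
  have hNmem : ∀ x : K, (x ^ (q + 1)) ^ q = x ^ (q + 1) := by
    intro x
    rw [← pow_mul]
    have h1 : (q + 1) * q = q * q + q := by ring
    rw [h1, pow_add, ← hqq, FiniteField.pow_card, pow_succ]; ring
  have hqodd : Odd q := hodd.pow
  have hnegq : ∀ x : K, (-x) ^ q = -(x ^ q) := fun x => Odd.neg_pow hqodd x
  have hclos : ∀ {u v : K}, u ^ q = u → v ^ q = v → (u + v) ^ q = u + v := by
    intro u v hu hv; rw [hpowq, hu, hv]
  have hφfix : ∀ u : ZMod p, (ZMod.castHom (dvd_refl p) K u) ^ q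
      = ZMod.castHom (dvd_refl p) K u := fun u => frob_fix_pow (cast_pow_p hp u) m
  set s : ZMod p := trZ p m K (b ^ (q + 1)) with hs
  have hcond : ∀ x : K, fieldTr p m (x ^ (q + 1)) = 0 ↔ trZ p m K (x ^ (q + 1)) = 0 := by
    intro x
    constructor
    · intro h; exact trZ_unique hp 0 (by rw [map_zero, h])
    · intro h
      have h2 := trZ_spec hp (hNmem x)
      rw [h, map_zero] at h2
      exact h2.symm
  set S := (∑ x ∈ Finset.univ.filter
      (fun x : K => x ≠ 0 ∧ fieldTr p m (x ^ (q + 1)) = 0), ψ x) with hS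
  set T := (∑ x ∈ Finset.univ.filter
      (fun x : K => trZ p m K (x ^ (q + 1)) = 0), ψ x) with hT
  have hfilters : Finset.univ.filter (fun x : K => trZ p m K (x ^ (q + 1)) = 0)
      = insert 0 (Finset.univ.filter
        (fun x : K => x ≠ 0 ∧ fieldTr p m (x ^ (q + 1)) = 0)) := by
    ext x
    simp only [mem_filter, mem_univ, true_and, Finset.mem_insert]
    constructor
    · intro hx
      rcases em (x = 0) with h0 | h0
      · exact Or.inl h0
      · exact Or.inr ⟨h0, (hcond x).mpr hx⟩
    · rintro (rfl | ⟨h0, hx⟩)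
      · rw [zero_pow (by omega), trZ_zero hp]
      · exact (hcond x).mp hx
  have hTS : T = S + 1 := by
    rw [hT, hfilters, Finset.sum_insert (by simp), AddChar.map_zero_eq_one, hS]
    ring
  set G : ZMod p → ℂ :=
    fun t => ∑ x : K, ψ x * ω ^ ((t * trZ p m K (x ^ (q + 1))).val) with hG
  have hinner : ∀ x : K, (∑ t : ZMod p, ω ^ ((t * trZ p m K (x ^ (q + 1))).val))
      = if trZ p m K (x ^ (q + 1)) = 0 then (p : ℂ) else 0 := by
    intro x
    split_ifs with h
    · rw [Finset.sum_congr rfl fun t _ => by rw [h, mul_zero, ZMod.val_zero, pow_zero]]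
      rw [Finset.sum_const, card_univ, ZMod.card, nsmul_eq_mul, mul_one]
    · exact omega_sum_mul hp hωp hω1 _ h
  have hsum_t : ∑ t : ZMod p, G t = (p : ℂ) * T := by
    simp only [hG]
    rw [Finset.sum_comm]
    calc ∑ x : K, ∑ t : ZMod p, ψ x * ω ^ ((t * trZ p m K (x ^ (q + 1))).val)
        = ∑ x : K, ψ x * (if trZ p m K (x ^ (q + 1)) = 0 then (p : ℂ) else 0) := by
          refine Finset.sum_congr rfl fun x _ => ?_
          rw [← Finset.mul_sum, hinner x]
      _ = ∑ x : K, (if trZ p m K (x ^ (q + 1)) = 0 then ψ x * (p : ℂ) else 0) := by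
          refine Finset.sum_congr rfl fun x _ => ?_
          split_ifs <;> simp
      _ = ∑ x ∈ Finset.univ.filter (fun x : K => trZ p m K (x ^ (q + 1)) = 0),
            ψ x * (p : ℂ) := (Finset.sum_filter _ _).symm
      _ = (p : ℂ) * T := by rw [hT, ← Finset.sum_mul]; ring
  have hG0 : G 0 = 0 := by
    simp only [hG]
    rw [Finset.sum_congr rfl fun x _ => by rw [zero_mul, ZMod.val_zero, pow_zero, mul_one]]
    have hψne : ψ ≠ 0 := by
      obtain ⟨a, ha⟩ := hψ
      intro h; rw [h] at ha; exact ha (AddChar.zero_apply a)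
    exact AddChar.sum_eq_zero_iff_ne_zero.mpr hψne
  -- evaluation of the pure Gauss-type sum
  have hNt : ∀ t : ZMod p, t ≠ 0 →
      (∑ y : K, ω ^ ((t * trZ p m K (y ^ (q + 1))).val)) = -(q : ℂ) := by
    intro t ht
    set f : K → ℂ := fun z => ω ^ ((t * trZ p m K z).val) with hf
    have hf0 : f 0 = 1 := by
      simp only [hf]
      rw [trZ_zero hp, mul_zero, ZMod.val_zero, pow_zero]
    set A := Finset.univ.filter (fun z : K => z ^ q = z) with hA
    have hFq0 : (∑ z ∈ A, f z) = 0 := by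
      obtain ⟨y₀, hy₀q, hy₀⟩ := aux_trZ_ne hp (by omega) hK α hα
      have hty₀ : t * trZ p m K y₀ ≠ 0 := mul_ne_zero ht hy₀
      have hfy₀ : f y₀ ≠ 1 := by
        simp only [hf]
        intro h
        exact hty₀ ((omega_val_eq_one_iff hp hωp hω1 _).mp h)
      have hshift : ∑ z ∈ A, f z = ∑ z ∈ A, f (z + y₀) := by
        apply Finset.sum_nbij' (fun z => z - y₀) (fun z => z + y₀)
        · intro z hz
          rw [hA, mem_filter] at hz ⊢
          refine ⟨mem_univ _, ?_⟩
          rw [sub_eq_add_neg, hpowq, hnegq, hz.2, hy₀q, ← sub_eq_add_neg]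
        · intro z hz
          rw [hA, mem_filter] at hz ⊢
          exact ⟨mem_univ _, hclos hz.2 hy₀q⟩
        · intro z _; rw [sub_add_cancel]
        · intro z _; rw [add_sub_cancel_right]
        · intro z _; rw [sub_add_cancel]
      have hmulf : ∀ z ∈ A, f (z + y₀) = f z * f y₀ := by
        intro z hz
        rw [hA, mem_filter] at hz
        simp only [hf]
        rw [← omega_pow_val_add hωp, ← mul_add, ← trZ_add hp hz.2 hy₀q]
      rw [Finset.sum_congr rfl hmulf, ← Finset.sum_mul] at hshift
      have h2 : (∑ z ∈ A, f z) * (1 - f y₀) = 0 := by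
        rw [mul_sub, mul_one, ← hshift, sub_self]
      rcases mul_eq_zero.mp h2 with h | h
      · exact h
      · exact absurd (by linear_combination -h : f y₀ = 1) hfy₀
    have hsplit : (∑ y : K, f (y ^ (q + 1)))
        = f 0 + ∑ y ∈ Finset.univ.filter (fun y : K => ¬ y = 0), f (y ^ (q + 1)) := by
      rw [← Finset.sum_filter_add_sum_filter_not Finset.univ (fun y : K => y = 0)]
      congr 1
      have h0 : Finset.univ.filter (fun y : K => y = 0) = {0} := by
        ext y; simp
      rw [h0, Finset.sum_singleton, zero_pow (by omega)]
    have hmaps : ∀ x ∈ Finset.univ.filter (fun y : K => ¬ y = 0), x ^ (q + 1) ∈ A.erase 0 := by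
      intro x hx
      rw [mem_filter] at hx
      rw [Finset.mem_erase, hA, mem_filter]
      exact ⟨pow_ne_zero _ hx.2, mem_univ _, hNmem x⟩
    have hfw := Finset.sum_fiberwise_of_maps_to hmaps (fun x => f (x ^ (q + 1)))
    have hfib : ∀ z ∈ A.erase 0,
        (∑ x ∈ (Finset.univ.filter (fun y : K => ¬ y = 0)).filter
          (fun x => x ^ (q + 1) = z), f (x ^ (q + 1))) = ((q : ℂ) + 1) * f z := by
      intro z hz
      rw [Finset.mem_erase, hA, mem_filter] at hz
      have hzq := hz.2.2
      have hz0 := hz.1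
      have hflt : ((Finset.univ.filter (fun y : K => ¬ y = 0)).filter
          (fun x => x ^ (q + 1) = z)) = Finset.univ.filter (fun x : K => x ^ (q + 1) = z) := by
        ext x
        simp only [mem_filter, mem_univ, true_and]
        constructor
        · rintro ⟨h1, h2⟩; exact h2
        · intro h2
          refine ⟨?_, h2⟩
          intro h0
          rw [h0, zero_pow (by omega)] at h2
          exact hz0 h2.symm
      rw [Finset.sum_congr rfl (fun x hx => by rw [(mem_filter.mp hx).2])]
      rw [Finset.sum_const, hflt, nsmul_eq_mul]
      rw [aux_fiber hp (by omega) hK α hα z hzq hz0, ← hq, Nat.cast_add, Nat.cast_one]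
    have hsumT : (∑ z ∈ A.erase 0, f z) = -1 := by
      have h3 := Finset.add_sum_erase A f (by rw [hA, mem_filter]; exact ⟨mem_univ _, zero_pow hq0⟩)
      rw [hFq0, hf0] at h3
      linear_combination h3
    calc (∑ y : K, ω ^ ((t * trZ p m K (y ^ (q + 1))).val)) = ∑ y : K, f (y ^ (q + 1)) := rfl
      _ = f 0 + ∑ y ∈ Finset.univ.filter (fun y : K => ¬ y = 0), f (y ^ (q + 1)) := hsplit
      _ = f 0 + ∑ z ∈ A.erase 0, ((q : ℂ) + 1) * f z := by
          rw [← hfw, Finset.sum_congr rfl hfib]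
      _ = f 0 + ((q : ℂ) + 1) * ∑ z ∈ A.erase 0, f z := by rw [Finset.mul_sum]
      _ = -(q : ℂ) := by rw [hf0, hsumT]; ring
  -- evaluation of G t for t ≠ 0
  have hGt : ∀ t : ZMod p, t ≠ 0 → G t = ω ^ ((-s * t⁻¹).val) * (-(q : ℂ)) := by
    intro t ht
    have hφinv : (ZMod.castHom (dvd_refl p) K t) * (ZMod.castHom (dvd_refl p) K t⁻¹) = 1 := by
      rw [← map_mul, mul_inv_cancel₀ ht, map_one]
    set c : K := -(b * ZMod.castHom (dvd_refl p) K t⁻¹) with hc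
    have hcq : c ^ q = -(b ^ q * ZMod.castHom (dvd_refl p) K t⁻¹) := by
      rw [hc, hnegq, mul_pow, hφfix]
    have hexp : ∀ y : K, trZ p m K (b * (y + c) ^ q + b ^ q * (y + c))
        + t * trZ p m K ((y + c) ^ (q + 1))
        = -s * t⁻¹ + t * trZ p m K (y ^ (q + 1)) := by
      intro y
      have hargA : b * (y + c) ^ q + b ^ q * (y + c)
          = (b * y ^ q + b ^ q * y) + (b * c ^ q + b ^ q * c) := by rw [hpowq]; ring
      have hargB : (y + c) ^ (q + 1)
          = y ^ (q + 1) + ((c * y ^ q + c ^ q * y) + c ^ (q + 1)) := by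
        simp only [pow_succ]
        rw [hpowq]; ring
      rw [hargA, hargB]
      rw [trZ_add hp (hmem b y) (hmem b c),
        trZ_add hp (hNmem y) (hclos (hmem c y) (hNmem c)),
        trZ_add hp (hmem c y) (hNmem c)]
      have hclaim1 : t * trZ p m K (c * y ^ q + c ^ q * y)
          = -trZ p m K (b * y ^ q + b ^ q * y) := by
        rw [← trZ_smul hp t (hmem c y)]
        have harg : (ZMod.castHom (dvd_refl p) K t) * (c * y ^ q + c ^ q * y)
            = -(b * y ^ q + b ^ q * y) := by
          rw [hc, hcq]
          linear_combination (-(b * y ^ q) - b ^ q * y) * hφinv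
        rw [harg, trZ_neg hp hodd]
      have e1 : b * c ^ q + b ^ q * c
          = (ZMod.castHom (dvd_refl p) K (-(t⁻¹ + t⁻¹))) * b ^ (q + 1) := by
        rw [hc, hcq, map_neg, map_add, pow_succ]
        ring
      have e2 : c ^ (q + 1) = (ZMod.castHom (dvd_refl p) K (t⁻¹ * t⁻¹)) * b ^ (q + 1) := by
        rw [pow_succ, hcq, hc, map_mul, pow_succ]
        ring
      have hclaim2 : trZ p m K (b * c ^ q + b ^ q * c) + t * trZ p m K (c ^ (q + 1))
          = -(s * t⁻¹) := by
        rw [e1, e2, trZ_smul hp _ (hNmem b), trZ_smul hp _ (hNmem b), ← hs]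
        have htt : t * t⁻¹ = 1 := mul_inv_cancel₀ ht
        linear_combination (t⁻¹ * s) * htt
      linear_combination hclaim1 + hclaim2
    have hGt1 : G t = ∑ y : K, ψ (y + c) * ω ^ ((t * trZ p m K ((y + c) ^ (q + 1))).val) := by
      simp only [hG]
      exact (Fintype.sum_equiv (Equiv.addRight c) _ _ fun y => rfl).symm
    have hper : ∀ y : K, ψ (y + c) * ω ^ ((t * trZ p m K ((y + c) ^ (q + 1))).val)
        = ω ^ ((-s * t⁻¹).val) * ω ^ ((t * trZ p m K (y ^ (q + 1))).val) := by
      intro y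
      rw [hψeq (y + c), ← omega_pow_val_add hωp, hexp y, omega_pow_val_add hωp]
    rw [hGt1, Finset.sum_congr rfl fun y _ => hper y, ← Finset.mul_sum, hNt t ht]
  -- final assembly
  have hpne : (p : ℂ) ≠ 0 := Nat.cast_ne_zero.mpr hp.ne_zero
  have hqcast : (q : ℂ) = (p : ℂ) * (p : ℂ) ^ (m - 1) := by
    rw [hq]
    push_cast
    rw [← pow_succ']
    congr 1
    omega
  have hsplit_t : ∑ t : ZMod p, G t = G 0 + ∑ t ∈ Finset.univ.erase (0 : ZMod p), G t :=
    (Finset.add_sum_erase _ _ (mem_univ 0)).symm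
  rcases em (s = 0) with hs0 | hs0
  · right
    have hval : ∀ t ∈ Finset.univ.erase (0 : ZMod p), G t = -(q : ℂ) := by
      intro t htm
      rw [hGt t (Finset.mem_erase.mp htm).1, hs0, neg_zero, zero_mul, ZMod.val_zero,
        pow_zero, one_mul]
    have hsum : ∑ t : ZMod p, G t = ((p : ℂ) - 1) * (-(q : ℂ)) := by
      rw [hsplit_t, hG0, zero_add, Finset.sum_congr rfl hval, Finset.sum_const,
        Finset.card_erase_of_mem (mem_univ 0), card_univ, ZMod.card, nsmul_eq_mul]
      have hcast : ((p - 1 : ℕ) : ℂ) = (p : ℂ) - 1 := by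
        have h1 := hp.pos
        push_cast [Nat.cast_sub h1]
        ring
      rw [hcast]
    rw [hsum_t, hTS, hqcast] at hsum
    have hfin : (p : ℂ) * S = (p : ℂ) * (-(((p : ℂ) - 1) * (p : ℂ) ^ (m - 1) + 1)) := by
      linear_combination hsum
    exact mul_left_cancel₀ hpne hfin
  · left
    have hbij : (∑ t ∈ Finset.univ.erase (0 : ZMod p), ω ^ ((-s * t⁻¹).val))
        = ∑ u ∈ Finset.univ.erase (0 : ZMod p), ω ^ u.val := by
      apply Finset.sum_nbij' (fun t : ZMod p => -s * t⁻¹) (fun u : ZMod p => -s * u⁻¹)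
      · intro t htm
        rw [Finset.mem_erase] at htm ⊢
        exact ⟨mul_ne_zero (neg_ne_zero.mpr hs0) (inv_ne_zero htm.1), mem_univ _⟩
      · intro u hu
        rw [Finset.mem_erase] at hu ⊢
        exact ⟨mul_ne_zero (neg_ne_zero.mpr hs0) (inv_ne_zero hu.1), mem_univ _⟩
      · intro t htm
        rw [Finset.mem_erase] at htm
        field_simp
      · intro u hu
        rw [Finset.mem_erase] at hu
        field_simp
      · intro t _; rfl
    have herase : (∑ u ∈ Finset.univ.erase (0 : ZMod p), ω ^ u.val) = -1 := by
      have h3 := Finset.add_sum_erase Finset.univ (fun u : ZMod p => ω ^ u.val) (mem_univ 0)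
      simp only [omega_sum_zmod hp hωp hω1, ZMod.val_zero, pow_zero] at h3
      linear_combination h3
    have hsum : ∑ t : ZMod p, G t = (q : ℂ) := by
      rw [hsplit_t, hG0, zero_add,
        Finset.sum_congr rfl (fun t htm => hGt t (Finset.mem_erase.mp htm).1),
        ← Finset.sum_mul, hbij, herase]
      ring
    rw [hsum_t, hTS, hqcast] at hsum
    have hfin : (p : ℂ) * S = (p : ℂ) * ((p : ℂ) ^ (m - 1) - 1) := by
      linear_combination hsum
    exact mul_left_cancel₀ hpne hfin
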